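/- (Theorem 6) For every real time t, the Bell-nonlocality measure B(t) := 2√(ι₁ + ι₂) − 2, where ι₁ ≥ ι₂ are the two largest eigenvalues of T(t) T(t)ᵀ, satisfies B(t) = 2√(1 + 4|α(t)|²|β(t)|²) − 2 = 2√(1 + E(t)²) − 2, and the battery capacity satisfies C_b(t) = 2 ω_b √(1 − B(t) − B(t)²/4). -/

import Mathlib

open Complex Matrix Kronecker Polynomial
open scoped ComplexConjugate

/-!
Because `ξ₁ ξ₂ = -1`, the cross terms in `|α|² + |β|²` cancel and the amplitudes are normalized.
For the state `α|01⟩ + β|10⟩` the correlation matrix is a rotation-scaling block on the `xy`-plane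
(built from `w = α β̄`) together with `-(|α|² + |β|²) = -1` on the `z`-axis, so
`T Tᵀ = diag(4|α|²|β|², 4|α|²|β|², 1)`. As `4|α|²|β|² ≤ (|α|² + |β|²)² = 1`, the two largest
eigenvalues add up to `1 + 4|α|²|β|² = 1 + E²`, and then `1 - B - B²/4 = 1 - E² = (1 - 2|α|²)²`.
-/

theorem norm_exp_neg_I_mul_ofReal (r : ℝ) : ‖exp (-I * (r : ℂ))‖ = 1 := by
  rw [show -I * (r : ℂ) = ((-r : ℝ) : ℂ) * I by push_cast; ring]
  exact norm_exp_ofReal_mul_I _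

theorem add_sqrt_div_mul_sub_sqrt_div_eq_neg_one {J Δ : ℝ} (hJ : J ≠ 0) :
    (Δ + √(J ^ 2 + Δ ^ 2)) / J * ((Δ - √(J ^ 2 + Δ ^ 2)) / J) = -1 := by
  have hsq : √(J ^ 2 + Δ ^ 2) ^ 2 = J ^ 2 + Δ ^ 2 := Real.sq_sqrt (by positivity)
  field_simp
  linear_combination -hsq

theorem norm_sq_add_norm_sq_eq_one_of_mul_eq_neg_one {u v : ℂ} (hu : ‖u‖ = 1) (hv : ‖v‖ = 1)
    {ξ₁ ξ₂ : ℝ} (hξ : ξ₁ * ξ₂ = -1) :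
    ‖(u * ξ₁ - v * ξ₂) / (ξ₁ - ξ₂)‖ ^ 2 + ‖(u - v) / (ξ₁ - ξ₂)‖ ^ 2 = 1 := by
  have hne : ξ₁ - ξ₂ ≠ 0 := by
    rw [sub_ne_zero]
    rintro rfl
    nlinarith [sq_nonneg ξ₁]
  have hcross : (u * ξ₁ * conj (v * ξ₂)).re = ξ₁ * ξ₂ * (u * conj v).re := by
    rw [map_mul, conj_ofReal, show u * ξ₁ * (conj v * ξ₂) = ((ξ₁ * ξ₂ : ℝ) : ℂ) * (u * conj v) by
      push_cast; ring, re_ofReal_mul]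
  replace hu : normSq u = 1 := by rw [normSq_eq_norm_sq, hu, one_pow]
  replace hv : normSq v = 1 := by rw [normSq_eq_norm_sq, hv, one_pow]
  simp only [Complex.sq_norm]
  rw [← ofReal_sub, normSq_div, normSq_div, normSq_ofReal, normSq_sub, normSq_sub,
    normSq_mul, normSq_mul, normSq_ofReal, normSq_ofReal, hcross, ← add_div,
    div_eq_one_iff_eq (mul_ne_zero hne hne)]
  linear_combination (ξ₁ ^ 2 + 1) * hu + (ξ₂ ^ 2 + 1) * hv + (2 - 2 * (u * conj v).re) * hξ

theorem one_sub_sub_sq_div_four_eq {c : ℝ} (hc : 0 ≤ 1 + c) :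
    1 - (2 * √(1 + c) - 2) - (2 * √(1 + c) - 2) ^ 2 / 4 = 1 - c := by
  linear_combination -(Real.sq_sqrt hc)

def pauli : Fin 3 → Matrix (Fin 2) (Fin 2) ℂ :=
  ![!![0, 1; 1, 0], !![0, -I; I, 0], !![1, 0; 0, -1]]

def singleExcitation (α β : ℂ) : Fin 2 × Fin 2 → ℂ :=
  fun x => if x = (0, 1) then α else if x = (1, 0) then β else 0

noncomputable def singleExcitationCorrelation (α β : ℂ) : Matrix (Fin 3) (Fin 3) ℝ :=
  !![2 * (α * conj β).re, 2 * (α * conj β).im, 0;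
    -(2 * (α * conj β).im), 2 * (α * conj β).re, 0;
    0, 0, -(‖α‖ ^ 2 + ‖β‖ ^ 2)]

theorem trace_singleExcitation_mul_pauli_kron (α β : ℂ) (i j : Fin 3) :
    ((Matrix.of fun x y => singleExcitation α β x * star (singleExcitation α β y)) *
      (pauli i ⊗ₖ pauli j)).trace = singleExcitationCorrelation α β i j := by
  fin_cases i <;> fin_cases j <;>
    simp [singleExcitation, pauli, singleExcitationCorrelation, Matrix.trace, Matrix.mul_apply,
      Fintype.sum_prod_type, Fin.sum_univ_two, Complex.ext_iff, Complex.sq_norm,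
      Complex.normSq_apply] <;>
    constructor <;> ring

theorem rotationBlock_mul_transpose {R : Type*} [CommRing R] (r m s : R) :
    !![r, m, 0; -m, r, 0; 0, 0, s] * (!![r, m, 0; -m, r, 0; 0, 0, s])ᵀ =
      diagonal ![r ^ 2 + m ^ 2, r ^ 2 + m ^ 2, s ^ 2] := by
  ext i j
  fin_cases i <;> fin_cases j <;> simp [Matrix.mul_apply, Fin.sum_univ_three] <;> ring

theorem singleExcitationCorrelation_mul_transpose (α β : ℂ) :
    singleExcitationCorrelation α β * (singleExcitationCorrelation α β)ᵀ =
      diagonal ![4 * ‖α‖ ^ 2 * ‖β‖ ^ 2, 4 * ‖α‖ ^ 2 * ‖β‖ ^ 2, (‖α‖ ^ 2 + ‖β‖ ^ 2) ^ 2] := by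
  have hw : (2 * (α * conj β).re) ^ 2 + (2 * (α * conj β).im) ^ 2 = 4 * ‖α‖ ^ 2 * ‖β‖ ^ 2 := by
    rw [mul_assoc, ← mul_pow, ← norm_conj β, ← norm_mul, Complex.sq_norm, normSq_apply]
    ring
  rw [singleExcitationCorrelation, rotationBlock_mul_transpose, hw, neg_sq]

theorem add_eq_add_of_X_sub_C_mul_eq {R : Type*} [CommRing R] [LinearOrder R]
    [IsStrictOrderedRing R] {a b c x y : R} (hcb : c ≤ b) (hba : b ≤ a) (hxy : x ≤ y)
    (h : (X - C a) * (X - C b) * (X - C c) = (X - C x) * (X - C x) * (X - C y)) :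
    a + b = x + y := by
  have hprod : ∀ p q r : R, (X - C p) * (X - C q) * (X - C r) =
      (({p, q, r} : Multiset R).map fun s => X - C s).prod := by
    intro p q r
    simp [mul_assoc]
  have hroots : ({a, b, c} : Multiset R) = {x, x, y} := by
    simpa only [hprod, roots_multiset_prod_X_sub_C] using congrArg roots h
  have hc : c ∈ ({x, x, y} : Multiset R) := hroots ▸ by simp
  have hx : x ∈ ({a, b, c} : Multiset R) := hroots ▸ by simp
  have hsum : a + (b + c) = x + (x + y) := by simpa using congrArg Multiset.sum hroots
  simp only [Multiset.insert_eq_cons, Multiset.mem_cons, Multiset.mem_singleton, or_self_left]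
    at hc hx
  -- `c` is a root on the right and `x` one on the left, so the two smallest roots agree: `c = x`.
  rcases hc with hc | hc <;> rcases hx with hx | hx | hx <;> linarith

theorem stmt_9_general (ωb J1 t : ℝ) (hJ1 : J1 ≠ 0)
    (Δ Ω e1 e2 ξ1 ξ2 p : ℝ) (α β : ℂ)
    (hΩ : Ω = Real.sqrt (J1 ^ 2 + Δ ^ 2))
    (hξ1 : ξ1 = (Δ + Ω) / J1) (hξ2 : ξ2 = (Δ - Ω) / J1)
    (hα : α = (Complex.exp (-Complex.I * ((e1 * t : ℝ) : ℂ)) * (ξ1 : ℂ) -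
        Complex.exp (-Complex.I * ((e2 * t : ℝ) : ℂ)) * (ξ2 : ℂ)) / ((ξ1 : ℂ) - (ξ2 : ℂ)))
    (hβ : β = (Complex.exp (-Complex.I * ((e1 * t : ℝ) : ℂ)) -
        Complex.exp (-Complex.I * ((e2 * t : ℝ) : ℂ))) / ((ξ1 : ℂ) - (ξ2 : ℂ)))
    (hp : p = ‖α‖ ^ 2)
    (E Cb : ℝ)
    (hE : E = 2 * ‖α‖ * ‖β‖)
    (hCb : Cb = 2 * ωb * |1 - 2 * p|)
    (ψ : Fin 2 × Fin 2 → ℂ)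
    (hψ : ψ = fun x => if x = (0, 1) then α else if x = (1, 0) then β else 0)
    (ρ : Matrix (Fin 2 × Fin 2) (Fin 2 × Fin 2) ℂ)
    (hρ : ρ = Matrix.of fun i j => ψ i * star (ψ j))
    (σ : Fin 3 → Matrix (Fin 2) (Fin 2) ℂ)
    (hσ : σ = ![!![0, 1; 1, 0], !![0, -Complex.I; Complex.I, 0], !![1, 0; 0, -1]])
    (T : Matrix (Fin 3) (Fin 3) ℝ)
    (hT : ∀ i j : Fin 3, (T i j : ℂ) = (ρ * (σ i ⊗ₖ σ j)).trace)
    (ι1 ι2 ι3 : ℝ) (hord : ι3 ≤ ι2 ∧ ι2 ≤ ι1)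
    (hchar : (T * Tᵀ).charpoly = (X - C ι1) * (X - C ι2) * (X - C ι3))
    (B : ℝ) (hB : B = 2 * Real.sqrt (ι1 + ι2) - 2) :
    B = 2 * Real.sqrt (1 + 4 * ‖α‖ ^ 2 * ‖β‖ ^ 2) - 2 ∧
    B = 2 * Real.sqrt (1 + E ^ 2) - 2 ∧
    Cb = 2 * ωb * Real.sqrt (1 - B - B ^ 2 / 4) := by
  have hnorm : ‖α‖ ^ 2 + ‖β‖ ^ 2 = 1 := by
    rw [hα, hβ]
    exact norm_sq_add_norm_sq_eq_one_of_mul_eq_neg_one (norm_exp_neg_I_mul_ofReal _)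
      (norm_exp_neg_I_mul_ofReal _)
      (by rw [hξ1, hξ2, hΩ]; exact add_sqrt_div_mul_sub_sqrt_div_eq_neg_one hJ1)
  have hTcorr : T = singleExcitationCorrelation α β := by
    ext i j
    subst hψ hρ hσ
    exact_mod_cast (hT i j).trans (trace_singleExcitation_mul_pauli_kron α β i j)
  set c := 4 * ‖α‖ ^ 2 * ‖β‖ ^ 2 with hc
  have hc1 : c ≤ 1 := by nlinarith [sq_nonneg (‖α‖ ^ 2 - ‖β‖ ^ 2)]
  have hcharpoly : (T * Tᵀ).charpoly = (X - C c) * (X - C c) * (X - C 1) := by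
    rw [hTcorr, singleExcitationCorrelation_mul_transpose, charpoly_diagonal, Fin.prod_univ_three,
      hnorm, one_pow]
    rfl
  have hι : ι1 + ι2 = c + 1 :=
    add_eq_add_of_X_sub_C_mul_eq hord.1 hord.2 hc1 (hchar.symm.trans hcharpoly)
  have hBc : B = 2 * √(1 + c) - 2 := by rw [hB, hι, add_comm]
  refine ⟨hBc, by rw [hBc, hE, hc]; ring_nf, ?_⟩
  rw [hCb, hBc, one_sub_sub_sq_div_four_eq (by positivity), hp, ← Real.sqrt_sq_eq_abs]
  congr 2
  linear_combination (4 * ‖α‖ ^ 2) * hnorm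

/-- Theorem 6: the Bell-nonlocality measure `B(t) = 2√(ι₁+ι₂) − 2`, with
`ι₁ ≥ ι₂` the two largest eigenvalues of `T Tᵀ`, satisfies
`B = 2√(1 + 4|α|²|β|²) − 2 = 2√(1 + E²) − 2`, and `C_b = 2ω_b √(1 − B − B²/4)`. -/
theorem stmt_9 (ωb ωc J1 J2 t : ℝ) (hωb : 0 < ωb) (hωc : 0 < ωc) (hJ1 : J1 ≠ 0)
    (Δ Ω e1 e2 ξ1 ξ2 p : ℝ) (α β : ℂ)
    (hΔ : Δ = ωb - ωc) (hΩ : Ω = Real.sqrt (J1 ^ 2 + Δ ^ 2))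
    (he1 : e1 = Ω - J2) (he2 : e2 = -Ω - J2)
    (hξ1 : ξ1 = (Δ + Ω) / J1) (hξ2 : ξ2 = (Δ - Ω) / J1)
    (hα : α = (Complex.exp (-Complex.I * ((e1 * t : ℝ) : ℂ)) * (ξ1 : ℂ) -
        Complex.exp (-Complex.I * ((e2 * t : ℝ) : ℂ)) * (ξ2 : ℂ)) / ((ξ1 : ℂ) - (ξ2 : ℂ)))
    (hβ : β = (Complex.exp (-Complex.I * ((e1 * t : ℝ) : ℂ)) -
        Complex.exp (-Complex.I * ((e2 * t : ℝ) : ℂ))) / ((ξ1 : ℂ) - (ξ2 : ℂ)))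
    (hp : p = ‖α‖ ^ 2)
    (E Cb : ℝ)
    (hE : E = 2 * ‖α‖ * ‖β‖)
    (hCb : Cb = 2 * ωb * |1 - 2 * p|)
    (ψ : Fin 2 × Fin 2 → ℂ)
    (hψ : ψ = fun x => if x = (0, 1) then α else if x = (1, 0) then β else 0)
    (ρ : Matrix (Fin 2 × Fin 2) (Fin 2 × Fin 2) ℂ)
    (hρ : ρ = Matrix.of fun i j => ψ i * star (ψ j))
    (σ : Fin 3 → Matrix (Fin 2) (Fin 2) ℂ)
    (hσ : σ = ![!![0, 1; 1, 0], !![0, -Complex.I; Complex.I, 0], !![1, 0; 0, -1]])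
    (T : Matrix (Fin 3) (Fin 3) ℝ)
    (hT : ∀ i j : Fin 3, (T i j : ℂ) = (ρ * (σ i ⊗ₖ σ j)).trace)
    (ι1 ι2 ι3 : ℝ) (hord : ι3 ≤ ι2 ∧ ι2 ≤ ι1)
    (hchar : (T * Tᵀ).charpoly = (X - C ι1) * (X - C ι2) * (X - C ι3))
    (B : ℝ) (hB : B = 2 * Real.sqrt (ι1 + ι2) - 2) :
    B = 2 * Real.sqrt (1 + 4 * ‖α‖ ^ 2 * ‖β‖ ^ 2) - 2 ∧
    B = 2 * Real.sqrt (1 + E ^ 2) - 2 ∧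
    Cb = 2 * ωb * Real.sqrt (1 - B - B ^ 2 / 4) :=
  stmt_9_general ωb J1 t hJ1 Δ Ω e1 e2 ξ1 ξ2 p α β hΩ hξ1 hξ2 hα hβ hp E Cb hE hCb ψ hψ ρ hρ σ hσ T
    hT ι1 ι2 ι3 hord hchar B hB
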